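/- arXiv:2112.15297 — 3 statements merged into one kernel-verified Lean document; each statement's English description precedes it below -/
import Mathlib

section
/- Let G be a finite simple graph with no isolated vertices and let S ⊆ V(G) be an independent set of G. Then the S-suspension G^S of G satisfies ind-match(G^S) = ind-match(G). -/
/-!
The inclusion `V ↪ Option V` is an induced embedding of `G` into `G^S`, so the induced matchings
of `G` are, up to this embedding, exactly the induced matchings of `G^S` avoiding the apex. An
induced matching of `G^S` through the apex consists of that single edge, because every edge of `G`
has an endpoint outside the independent set `S`, and that endpoint is joined to the apex. Since `G`
has no isolated vertices, a single edge is also an induced matching of `G`. Hence both graphs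
realise the same sizes of induced matchings.
-/

namespace MatchingPaper

variable {V : Type*}

/-- `M` is a matching of `G` : a finite set of edges of `G` that are pairwise disjoint. -/
def IsMatching (G : SimpleGraph V) (M : Finset (Sym2 V)) : Prop :=
  (↑M : Set (Sym2 V)) ⊆ G.edgeSet ∧
    ∀ e ∈ M, ∀ f ∈ M, e ≠ f → ∀ v : V, v ∈ e → v ∉ f

open Classical in
/-- `M` is a maximal matching of `G` : adding any further edge of `G` destroys
the matching property. -/
def IsMaximalMatching (G : SimpleGraph V) (M : Finset (Sym2 V)) : Prop :=
  IsMatching G M ∧ ∀ e ∈ G.edgeSet, e ∉ M → ¬ IsMatching G (insert e M)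

/-- `M` is an induced matching of `G` : a matching such that no edge of `G`
meets two distinct edges of `M`. -/
def IsInducedMatching (G : SimpleGraph V) (M : Finset (Sym2 V)) : Prop :=
  IsMatching G M ∧
    ∀ e ∈ M, ∀ f ∈ M, e ≠ f → ∀ g ∈ G.edgeSet,
      (∃ v : V, v ∈ g ∧ v ∈ e) → ¬ ∃ v : V, v ∈ g ∧ v ∈ f

/-- The matching number `match(G)` : the maximum size of a matching of `G`. -/
noncomputable def matchNum (G : SimpleGraph V) : ℕ :=
  sSup {n : ℕ | ∃ M : Finset (Sym2 V), IsMatching G M ∧ M.card = n}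

/-- The minimum matching number `min-match(G)` : the minimum size of a maximal
matching of `G`. -/
noncomputable def minMatchNum (G : SimpleGraph V) : ℕ :=
  sInf {n : ℕ | ∃ M : Finset (Sym2 V), IsMaximalMatching G M ∧ M.card = n}

/-- The induced matching number `ind-match(G)` : the maximum size of an induced
matching of `G`. -/
noncomputable def indMatchNum (G : SimpleGraph V) : ℕ :=
  sSup {n : ℕ | ∃ M : Finset (Sym2 V), IsInducedMatching G M ∧ M.card = n}

/-- The `S`-suspension `G^S` of `G` : a new vertex (here `none`) is joined to all
vertices not belonging to `S`. -/
def suspension (G : SimpleGraph V) (S : Set V) : SimpleGraph (Option V) :=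
  SimpleGraph.fromRel fun a b =>
    match a, b with
    | some u, some v => G.Adj u v
    | some u, none => u ∉ S
    | none, _ => False

section InducedMatching

variable {W : Type*} {G : SimpleGraph V} {H : SimpleGraph W}

theorem isInducedMatching_singleton {e : Sym2 V} (he : e ∈ G.edgeSet) :
    IsInducedMatching G {e} := by
  refine ⟨⟨by simpa using he, ?_⟩, ?_⟩ <;>
  · intro e₁ he₁ e₂ he₂ hne
    simp only [Finset.mem_singleton] at he₁ he₂
    exact absurd (he₁.trans he₂.symm) hne

theorem apply_mem_sym2Map_iff (f : V ↪ W) {v : V} {e : Sym2 V} :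
    f v ∈ f.sym2Map e ↔ v ∈ e := by
  simp

theorem isMatching_map_iff (f : G ↪g H) {M : Finset (Sym2 V)} :
    IsMatching H (M.map f.toEmbedding.sym2Map) ↔ IsMatching G M := by
  have hsub : (↑(M.map f.toEmbedding.sym2Map) : Set (Sym2 W)) ⊆ H.edgeSet ↔
      (↑M : Set (Sym2 V)) ⊆ G.edgeSet := by
    simp [Set.subset_def, f.map_mem_edgeSet_iff]
  refine and_congr hsub ⟨fun h e he e' he' hne v hv hv' => ?_, fun h => ?_⟩
  · exact h _ (Finset.mem_map_of_mem _ he) _ (Finset.mem_map_of_mem _ he')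
      (f.toEmbedding.sym2Map.injective.ne hne) (f v)
      ((apply_mem_sym2Map_iff _).2 hv) ((apply_mem_sym2Map_iff _).2 hv')
  · simp only [Finset.forall_mem_map]
    intro e he e' he' hne w hw hw'
    obtain ⟨v, hv, rfl⟩ := Sym2.mem_map.1 hw
    exact h e he e' he' (ne_of_apply_ne _ hne) v hv ((apply_mem_sym2Map_iff _).1 hw')

theorem isInducedMatching_map_iff (f : G ↪g H) {M : Finset (Sym2 V)} :
    IsInducedMatching H (M.map f.toEmbedding.sym2Map) ↔ IsInducedMatching G M := by
  rw [IsInducedMatching, IsInducedMatching, isMatching_map_iff]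
  refine and_congr_right fun hM => ⟨fun h e he e' he' hne g hg ⟨v, hvg, hve⟩ ⟨v', hvg', hve'⟩ => ?_,
    fun h => ?_⟩
  · exact h _ (Finset.mem_map_of_mem _ he) _ (Finset.mem_map_of_mem _ he')
      (f.toEmbedding.sym2Map.injective.ne hne) (f.toEmbedding.sym2Map g)
      (f.map_mem_edgeSet_iff.2 hg)
      ⟨f v, (apply_mem_sym2Map_iff _).2 hvg, (apply_mem_sym2Map_iff _).2 hve⟩
      ⟨f v', (apply_mem_sym2Map_iff _).2 hvg', (apply_mem_sym2Map_iff _).2 hve'⟩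
  · simp only [Finset.forall_mem_map]
    rintro e he e' he' hne g hg ⟨_, hwg, hwe⟩ ⟨_, hwg', hwe'⟩
    obtain ⟨v, hv, rfl⟩ := Sym2.mem_map.1 hwe
    obtain ⟨v', hv', rfl⟩ := Sym2.mem_map.1 hwe'
    have hne : e ≠ e' := ne_of_apply_ne _ hne
    have hvv' : v ≠ v' := fun h => hM.2 e he e' he' hne v hv (h ▸ hv')
    obtain rfl : g = s(f v, f v') := (Sym2.mem_and_mem_iff (f.injective.ne hvv')).1 ⟨hwg, hwg'⟩
    exact h e he e' he' hne s(v, v') (f.map_adj_iff.1 hg) ⟨v, by simp, hv⟩ ⟨v', by simp, hv'⟩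

end InducedMatching

section Suspension

variable (G : SimpleGraph V) (S : Set V)

@[simp]
theorem suspension_adj_some_some {u v : V} :
    (suspension G S).Adj (some u) (some v) ↔ G.Adj u v := by
  simp only [suspension, SimpleGraph.fromRel_adj, ne_eq, Option.some.injEq]
  exact ⟨fun ⟨_, h⟩ => h.elim id G.adj_symm, fun h => ⟨h.ne, Or.inl h⟩⟩

@[simp]
theorem suspension_adj_some_none {u : V} : (suspension G S).Adj (some u) none ↔ u ∉ S := by
  simp [suspension]

def suspensionEmbedding : G ↪g suspension G S :=
  ⟨Function.Embedding.some, by simp⟩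

variable {G S}

theorem exists_some_notMem_of_mem_edgeSet (hS : ∀ u ∈ S, ∀ v ∈ S, ¬ G.Adj u v)
    {e : Sym2 (Option V)} (he : e ∈ (suspension G S).edgeSet) (hnone : none ∉ e) :
    ∃ x ∉ S, some x ∈ e := by
  induction e using Sym2.ind with | _ a b => ?_
  cases a with
  | none => simp at hnone
  | some x =>
    cases b with
    | none => simp at hnone
    | some y =>
      by_cases hx : x ∈ S
      · exact ⟨y, fun hy => hS x hx y hy (by simpa using he), by simp⟩
      · exact ⟨x, hx, by simp⟩

/-- By independence of `S`, any other edge of `M` has an endpoint joined to the apex, and that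
edge of `G^S` meets both. -/
theorem IsInducedMatching.eq_singleton_of_none_mem (hS : ∀ u ∈ S, ∀ v ∈ S, ¬ G.Adj u v)
    {M : Finset (Sym2 (Option V))} (hM : IsInducedMatching (suspension G S) M)
    {e : Sym2 (Option V)} (he : e ∈ M) (hnone : none ∈ e) : M = {e} := by
  refine Finset.eq_singleton_iff_unique_mem.2 ⟨he, fun e' he' => by_contra fun hne => ?_⟩
  have hnone' : none ∉ e' := hM.1.2 e he e' he' (Ne.symm hne) none hnone
  obtain ⟨x, hx, hxe'⟩ := exists_some_notMem_of_mem_edgeSet hS (hM.1.1 he') hnone'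
  exact hM.2 e' he' e he hne s(some x, none) (by simpa using hx) ⟨some x, by simp, hxe'⟩
    ⟨none, by simp, hnone⟩

theorem exists_map_some_eq_of_forall_none_notMem {M : Finset (Sym2 (Option V))}
    (hM : ∀ e ∈ M, none ∉ e) :
    ∃ M' : Finset (Sym2 V), M'.map Function.Embedding.some.sym2Map = M := by
  classical
  have hrange : (↑M : Set (Sym2 (Option V))) ⊆ Sym2.map some '' Set.univ := by
    intro e he
    induction e using Sym2.ind with | _ a b => ?_
    obtain ⟨x, rfl⟩ := Option.ne_none_iff_exists'.1 fun h => hM _ he (h ▸ Sym2.mem_mk_left a b)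
    obtain ⟨y, rfl⟩ := Option.ne_none_iff_exists'.1 fun h => hM _ he (h ▸ Sym2.mem_mk_right _ b)
    exact ⟨s(x, y), trivial, rfl⟩
  obtain ⟨M', -, hM'⟩ := Finset.subset_set_image_iff.1 hrange
  exact ⟨M', by rw [Finset.map_eq_image]; exact hM'⟩

end Suspension

theorem indMatchNum_suspension_general {V : Type*} (G : SimpleGraph V) (S : Set V)
    (hno_isolated : ∀ v : V, ∃ u : V, G.Adj v u)
    (hS : ∀ u ∈ S, ∀ v ∈ S, ¬ G.Adj u v) :
    indMatchNum (suspension G S) = indMatchNum G := by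
  unfold indMatchNum
  congr 1
  ext n
  constructor
  · rintro ⟨M, hM, rfl⟩
    by_cases hapex : ∃ e ∈ M, none ∈ e
    · obtain ⟨e, he, hnone⟩ := hapex
      have hdiag := (suspension G S).not_isDiag_of_mem_edgeSet (hM.1.1 he)
      obtain ⟨u, -⟩ := Option.ne_none_iff_exists'.1 (Sym2.other_ne hdiag hnone)
      obtain ⟨w, huw⟩ := hno_isolated u
      rw [hM.eq_singleton_of_none_mem hS he hnone]
      exact ⟨{s(u, w)}, isInducedMatching_singleton huw, rfl⟩
    · obtain ⟨M', rfl⟩ :=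
        exists_map_some_eq_of_forall_none_notMem fun e he hnone => hapex ⟨e, he, hnone⟩
      exact ⟨M', (isInducedMatching_map_iff (suspensionEmbedding G S)).1 hM,
        (Finset.card_map _).symm⟩
  · rintro ⟨M, hM, rfl⟩
    exact ⟨_, (isInducedMatching_map_iff (suspensionEmbedding G S)).2 hM, Finset.card_map _⟩

theorem indMatchNum_suspension {V : Type*} [Fintype V] (G : SimpleGraph V) (S : Set V)
    (hno_isolated : ∀ v : V, ∃ u : V, G.Adj v u)
    (hS : ∀ u ∈ S, ∀ v ∈ S, ¬ G.Adj u v) :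
    indMatchNum (suspension G S) = indMatchNum G :=
  indMatchNum_suspension_general G S hno_isolated hS

end MatchingPaper
end

section
/- Let n ≥ 2 be an even integer and let G be a connected finite simple graph with |V(G)| = n. If min-match(G) = n/2, then G is isomorphic to the complete graph K_n or to the complete bipartite graph K_{n/2,n/2}; in particular ind-match(G) = 1, so there is no connected simple graph G on n vertices with ind-match(G) = p and min-match(G) = match(G) = n/2 for any p ≥ 2. -/
namespace MatchingPaper

variable {V : Type*}

/-!
If every maximal matching of a connected graph `G` is perfect (`G` is *randomly matchable*),
then every path `w - x - y - z` on four vertices closes up: `w ~ z`. Indeed, extend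
`{wx, yz}` to a perfect matching and trade these two edges for `xy`; what remains is a
matching missing only `w` and `z`, which can only be non-maximal through the edge `wz`.
By connectivity this makes every edge dominating: each vertex is adjacent to an end of it.
Now a triangle spreads along paths of length three until `G` is complete, while in the
triangle-free case the neighbourhood of a vertex and its complement are the two sides of a
complete bipartite graph; a perfect matching forces these sides to have equal size.
Since every edge dominates, any two edges of a matching are joined by an edge, so induced
matchings have at most one edge.
-/

open Classical

variable {G : SimpleGraph V} {M N : Finset (Sym2 V)} {u v w x y z a b c : V}

theorem IsMatching.subset (hN : IsMatching G N) (h : M ⊆ N) : IsMatching G M :=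
  ⟨fun _ he => hN.1 (h he), fun e he f hf => hN.2 e (h he) f (h hf)⟩

theorem IsMatching.eq_of_mem_of_mem (hM : IsMatching G M) {e f : Sym2 V} (he : e ∈ M)
    (hf : f ∈ M) (hve : v ∈ e) (hvf : v ∈ f) : e = f := by
  by_contra h
  exact hM.2 e he f hf h v hve hvf

theorem IsMatching.insert (hM : IsMatching G M) {e : Sym2 V} (he : e ∈ G.edgeSet)
    (hdisj : ∀ f ∈ M, ∀ v ∈ e, v ∉ f) : IsMatching G (insert e M) := by
  refine ⟨by simpa only [Finset.coe_insert, Set.insert_subset_iff] using ⟨he, hM.1⟩, ?_⟩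
  simp only [Finset.mem_insert]
  rintro f (rfl | hf) g (rfl | hg) hfg v hvf hvg
  · exact hfg rfl
  · exact hdisj g hg v hvf hvg
  · exact hdisj f hf v hvg hvf
  · exact hM.2 f hf g hg hfg v hvf hvg

theorem IsMatching.card_biUnion_toFinset (hM : IsMatching G M) :
    (M.biUnion Sym2.toFinset).card = 2 * M.card := by
  rw [Finset.card_biUnion, Finset.sum_congr rfl, Finset.sum_const, smul_eq_mul, mul_comm]
  · exact fun e he => Sym2.card_toFinset_of_not_isDiag e (G.not_isDiag_of_mem_edgeSet (hM.1 he))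
  · intro e he f hf hef
    simp only [Function.onFun, Finset.disjoint_left, Sym2.mem_toFinset]
    exact hM.2 e he f hf hef

theorem IsMatching.card_le_card_of_isIndepSet (hM : IsMatching G M) {S : Finset V}
    (hS : G.IsIndepSet S) (hcov : ∀ v, ∃ e ∈ M, v ∈ e) : S.card ≤ M.card := by
  choose f hfM hvf using hcov
  refine Finset.card_le_card_of_injOn f (fun v _ => hfM v) fun v hv w hw hfvw => ?_
  by_contra hvw
  have hf : f v = s(v, w) := (Sym2.mem_and_mem_iff hvw).1 ⟨hvf v, hfvw ▸ hvf w⟩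
  exact hS hv hw hvw (G.mem_edgeSet.1 (hf ▸ hM.1 (hfM v)))

theorem IsMatching.exists_isMaximalMatching_superset [Finite V] (hM : IsMatching G M) :
    ∃ N, M ⊆ N ∧ IsMaximalMatching G N := by
  obtain ⟨N, hMN, hN⟩ := Set.toFinite {N | IsMatching G N}
    |>.exists_le_maximal (a := M) hM
  refine ⟨N, hMN, hN.1, fun e _ heN hins => heN ?_⟩
  exact hN.2 hins (Finset.subset_insert e N) (Finset.mem_insert_self e N)

theorem minMatchNum_le_card (hM : IsMaximalMatching G M) : minMatchNum G ≤ M.card :=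
  Nat.sInf_le ⟨M, hM, rfl⟩

noncomputable def completeBipartiteGraphIsoOfAdjIff (P : V → Prop)
    (hP : ∀ v w, G.Adj v w ↔ (P v ↔ ¬ P w)) :
    completeBipartiteGraph {v // P v} {v // ¬ P v} ≃g G where
  toEquiv := Equiv.sumCompl P
  map_rel_iff' := by rintro (⟨a, ha⟩ | ⟨a, ha⟩) (⟨b, hb⟩ | ⟨b, hb⟩) <;> simp [hP, ha, hb]

def IsRandomlyMatchable (G : SimpleGraph V) : Prop :=
  ∀ M, IsMaximalMatching G M → ∀ v, ∃ e ∈ M, v ∈ e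

theorem isRandomlyMatchable_of_card_le_two_mul_minMatchNum [Fintype V]
    (h : Fintype.card V ≤ 2 * minMatchNum G) : IsRandomlyMatchable G := by
  intro M hM v
  have hcard : Fintype.card V ≤ (M.biUnion Sym2.toFinset).card := by
    rw [hM.1.card_biUnion_toFinset]
    exact h.trans (Nat.mul_le_mul_left 2 (minMatchNum_le_card hM))
  have hv : v ∈ M.biUnion Sym2.toFinset := by
    rw [Finset.eq_univ_of_card _ (le_antisymm (Finset.card_le_univ _) hcard)]
    exact Finset.mem_univ v
  simpa only [Finset.mem_biUnion, Sym2.mem_toFinset] using hv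

namespace IsRandomlyMatchable

theorem exists_perfect_superset [Finite V] (hG : IsRandomlyMatchable G) (hM : IsMatching G M) :
    ∃ N, M ⊆ N ∧ IsMatching G N ∧ ∀ v, ∃ e ∈ N, v ∈ e := by
  obtain ⟨N, hMN, hN⟩ := hM.exists_isMaximalMatching_superset
  exact ⟨N, hMN, hN.1, hG N hN⟩

theorem adj_of_forall_covered (hG : IsRandomlyMatchable G) (hN : IsMatching G N)
    (hw : ∀ e ∈ N, w ∉ e) (hcov : ∀ v, v ≠ w → v ≠ z → ∃ e ∈ N, v ∈ e) : G.Adj w z := by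
  by_contra hwz
  suffices hmax : IsMaximalMatching G N by
    obtain ⟨e, he, hwe⟩ := hG N hmax w
    exact hw e he hwe
  refine ⟨hN, fun e he heN hins => ?_⟩
  have huncov : ∀ v ∈ e, v = w ∨ v = z := fun v hv => by
    by_contra! hvwz
    obtain ⟨f, hf, hvf⟩ := hcov v hvwz.1 hvwz.2
    exact hins.2 e (Finset.mem_insert_self e N) f (Finset.mem_insert_of_mem hf)
      (fun hef => heN (hef ▸ hf)) v hv hvf
  induction e using Sym2.ind with
  | _ p q =>
    have hpq : G.Adj p q := he
    rcases huncov p (Sym2.mem_mk_left p q) with rfl | rfl <;>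
      rcases huncov q (Sym2.mem_mk_right p q) with rfl | rfl
    exacts [hpq.ne rfl, hwz hpq, hwz hpq.symm, hpq.ne rfl]

theorem two_mul_card_subtype_eq [Fintype V] (hG : IsRandomlyMatchable G) {P : V → Prop}
    (hP : ∀ v w, G.Adj v w ↔ (P v ↔ ¬ P w)) : 2 * Fintype.card {v // P v} = Fintype.card V := by
  obtain ⟨M, -, hM, hcov⟩ := hG.exists_perfect_superset (M := ∅) ⟨by simp, by simp⟩
  have hV : Fintype.card V = 2 * M.card := by
    rw [← hM.card_biUnion_toFinset,
      Finset.eq_univ_of_forall (s := M.biUnion Sym2.toFinset) fun v => by simpa using hcov v,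
      Finset.card_univ]
  have hside (S : Finset V) (hS : ∀ v ∈ S, ∀ w ∈ S, ¬ G.Adj v w) : S.card ≤ M.card :=
    hM.card_le_card_of_isIndepSet (fun v hv w hw _ => hS v hv w hw) hcov
  have h₁ : (Finset.univ.filter P).card ≤ M.card :=
    hside _ fun v hv w hw hvw => by simp_all
  have h₂ : (Finset.univ.filter fun v => ¬ P v).card ≤ M.card :=
    hside _ fun v hv w hw hvw => by simp_all
  have h₃ := Finset.card_filter_add_card_filter_not (s := Finset.univ) P
  rw [Finset.card_univ] at h₃
  rw [Fintype.card_subtype]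
  convert (show 2 * (Finset.univ.filter P).card = Fintype.card V by omega)

variable [Finite V]

theorem adj_of_adj_of_adj_of_adj (hG : IsRandomlyMatchable G) (hwx : G.Adj w x)
    (hxy : G.Adj x y) (hyz : G.Adj y z) (hwy : w ≠ y) (hxz : x ≠ z) (hwz : w ≠ z) :
    G.Adj w z := by
  have hpair : IsMatching G {s(w, x), s(y, z)} := by
    refine IsMatching.insert ⟨by simpa using hyz, by simp⟩ hwx ?_
    simp only [Finset.mem_singleton]
    rintro f rfl v hv hvf
    rcases Sym2.mem_iff.1 hv with rfl | rfl <;> rcases Sym2.mem_iff.1 hvf with h | h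
    exacts [hwy h, hwz h, hxy.ne h, hxz h]
  obtain ⟨M, hpairM, hM, hcov⟩ := hG.exists_perfect_superset hpair
  have hwxM : s(w, x) ∈ M := hpairM (by simp)
  have hyzM : s(y, z) ∈ M := hpairM (by simp)
  set R := M \ {s(w, x), s(y, z)}
  have hRM : R ⊆ M := Finset.sdiff_subset
  have hR : ∀ f ∈ R, ∀ v, (v ∈ s(w, x) ∨ v ∈ s(y, z)) → v ∉ f := by
    intro f hf v hv hvf
    have hf' : f ∉ ({s(w, x), s(y, z)} : Finset _) := (Finset.mem_sdiff.1 hf).2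
    rcases hv with hv | hv
    · exact hf' (by simp [hM.eq_of_mem_of_mem (hRM hf) hwxM hvf hv])
    · exact hf' (by simp [hM.eq_of_mem_of_mem (hRM hf) hyzM hvf hv])
  refine hG.adj_of_forall_covered (N := insert s(x, y) R) ((hM.subset hRM).insert hxy ?_) ?_ ?_
  · simp only [Sym2.mem_iff]
    rintro f hf v (rfl | rfl)
    exacts [hR f hf v (.inl (Sym2.mem_mk_right w v)), hR f hf v (.inr (Sym2.mem_mk_left v z))]
  · simp only [Finset.mem_insert]
    rintro f (rfl | hf)
    · simp [hwx.ne, hwy]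
    · exact hR f hf w (.inl (Sym2.mem_mk_left w x))
  · intro v hvw hvz
    obtain ⟨f, hf, hvf⟩ := hcov v
    by_cases hfR : f ∈ R
    · exact ⟨f, Finset.mem_insert_of_mem hfR, hvf⟩
    refine ⟨s(x, y), Finset.mem_insert_self _ _, ?_⟩
    have : f = s(w, x) ∨ f = s(y, z) := by simp [R, hf] at hfR; tauto
    rcases this with rfl | rfl <;> simp_all

theorem adj_or_adj_of_adj (hG : IsRandomlyMatchable G) (hconn : G.Connected) (hxy : G.Adj x y)
    (u : V) : G.Adj u x ∨ G.Adj u y := by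
  suffices h : u = x ∨ u = y ∨ G.Adj u x ∨ G.Adj u y by
    rcases h with rfl | rfl | h | h
    exacts [.inr hxy, .inl hxy.symm, .inl h, .inr h]
  obtain ⟨p⟩ := hconn.preconnected u x
  induction p with
  | nil => exact .inl rfl
  | @cons u m x hum _ ih =>
    specialize ih hxy
    rcases eq_or_ne u x with rfl | hux
    · exact .inl rfl
    rcases eq_or_ne u y with rfl | huy
    · exact .inr (.inl rfl)
    rcases ih with rfl | rfl | hmx | hmy
    · exact .inr (.inr (.inl hum))
    · exact .inr (.inr (.inr hum))
    · rcases eq_or_ne m y with rfl | hmy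
      · exact .inr (.inr (.inr hum))
      · exact .inr (.inr (.inr (hG.adj_of_adj_of_adj_of_adj hum hmx hxy hux hmy huy)))
    · rcases eq_or_ne m x with rfl | hmx
      · exact .inr (.inr (.inl hum))
      · exact .inr (.inr (.inl (hG.adj_of_adj_of_adj_of_adj hum hmy hxy.symm huy hmx hux)))

theorem adj_of_triangle (hG : IsRandomlyMatchable G) (hconn : G.Connected)
    (hab : G.Adj a b) (hbc : G.Adj b c) (hca : G.Adj c a) (hua : u ≠ a) : G.Adj u a := by
  rcases hG.adj_or_adj_of_adj hconn hbc u with hub | huc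
  · rcases eq_or_ne u c with rfl | huc
    · exact hca
    · exact hG.adj_of_adj_of_adj_of_adj hub hbc hca huc hab.ne' hua
  · rcases eq_or_ne u b with rfl | hub
    · exact hab.symm
    · exact hG.adj_of_adj_of_adj_of_adj huc hbc.symm hab.symm hub hca.ne hua

theorem eq_top_of_triangle (hG : IsRandomlyMatchable G) (hconn : G.Connected)
    (hab : G.Adj a b) (hbc : G.Adj b c) (hca : G.Adj c a) : G = ⊤ := by
  have ha : ∀ u, u ≠ a → G.Adj u a := fun u => hG.adj_of_triangle hconn hab hbc hca
  have hb : ∀ u, u ≠ b → G.Adj u b := fun u => hG.adj_of_triangle hconn hbc hca hab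
  ext u w
  refine ⟨G.ne_of_adj, fun huw => ?_⟩
  rcases eq_or_ne u a with rfl | hua
  · exact (ha w huw.symm).symm
  rcases eq_or_ne w a with rfl | hwa
  · exact ha u huw
  rcases eq_or_ne u b with rfl | hub
  · exact (hb w huw.symm).symm
  rcases eq_or_ne w b with rfl | hwb
  · exact hb u huw
  exact hG.adj_of_adj_of_adj_of_adj (ha u hua) hab (hb w hwb).symm hub hwa.symm huw

theorem adj_iff_of_cliqueFree (hG : IsRandomlyMatchable G) (hconn : G.Connected)
    (hcf : G.CliqueFree 3) (hxy : G.Adj x y) (v w : V) :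
    G.Adj v w ↔ (G.Adj v y ↔ ¬ G.Adj w y) := by
  have triangle {a b c : V} (hab : G.Adj a b) (hbc : G.Adj b c) (hca : G.Adj c a) : False :=
    hcf {a, b, c} (SimpleGraph.is3Clique_triple_iff.2 ⟨hab, hca.symm, hbc⟩)
  refine ⟨fun hvw => ⟨fun hvy hwy => triangle hvw hwy hvy.symm, fun hwy => ?_⟩, fun h => ?_⟩
  · by_contra hvy
    exact triangle hvw ((hG.adj_or_adj_of_adj hconn hxy w).resolve_right hwy)
      ((hG.adj_or_adj_of_adj hconn hxy v).resolve_right hvy).symm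
  · by_cases hvy : G.Adj v y
    · exact ((hG.adj_or_adj_of_adj hconn hvy w).resolve_right (h.1 hvy)).symm
    · exact (hG.adj_or_adj_of_adj hconn (not_not.1 (mt h.2 hvy)) v).resolve_right hvy

theorem card_le_one_of_isInducedMatching (hG : IsRandomlyMatchable G) (hconn : G.Connected)
    (hN : IsInducedMatching G N) : N.card ≤ 1 := by
  refine Finset.card_le_one.2 fun e he f hf => by_contra fun hef => ?_
  induction e using Sym2.ind with | _ x y =>
  induction f using Sym2.ind with | _ u v =>
  rcases hG.adj_or_adj_of_adj hconn (hN.1.1 he) u with hux | huy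
  · exact hN.2 _ he _ hf hef s(x, u) hux.symm ⟨x, Sym2.mem_mk_left x u, Sym2.mem_mk_left x y⟩
      ⟨u, Sym2.mem_mk_right x u, Sym2.mem_mk_left u v⟩
  · exact hN.2 _ he _ hf hef s(y, u) huy.symm ⟨y, Sym2.mem_mk_left y u, Sym2.mem_mk_right x y⟩
      ⟨u, Sym2.mem_mk_right y u, Sym2.mem_mk_left u v⟩

theorem indMatchNum_eq_one [Nontrivial V] (hG : IsRandomlyMatchable G) (hconn : G.Connected) :
    indMatchNum G = 1 := by
  obtain ⟨x⟩ := hconn.nonempty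
  obtain ⟨y, hxy⟩ := hconn.preconnected.exists_adj_of_nontrivial x
  refine IsGreatest.csSup_eq ⟨⟨{s(x, y)}, ⟨⟨by simpa using hxy, by simp⟩, by simp⟩, rfl⟩, ?_⟩
  rintro _ ⟨N, hN, rfl⟩
  exact hG.card_le_one_of_isInducedMatching hconn hN

end IsRandomlyMatchable

theorem minMatchNum_eq_half_card {V : Type*} [Fintype V] (n : ℕ) (hn : 2 ≤ n)
    (heven : Even n) (G : SimpleGraph V) (hcard : Fintype.card V = n)
    (hconn : G.Connected) (hmin : minMatchNum G = n / 2) :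
    (Nonempty (G ≃g (⊤ : SimpleGraph V)) ∨
        Nonempty (G ≃g completeBipartiteGraph (Fin (n / 2)) (Fin (n / 2)))) ∧
      indMatchNum G = 1 ∧
      ∀ (W : Type) [Fintype W] (H : SimpleGraph W), H.Connected → Fintype.card W = n →
        ∀ p : ℕ, 2 ≤ p →
          ¬ (indMatchNum H = p ∧ minMatchNum H = n / 2 ∧ matchNum H = n / 2) := by
  have hG : IsRandomlyMatchable G := isRandomlyMatchable_of_card_le_two_mul_minMatchNum
    (by rw [hmin, hcard, Nat.two_mul_div_two_of_even heven])
  have : Nontrivial V := Fintype.one_lt_card_iff_nontrivial.1 (by omega)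
  refine ⟨?_, hG.indMatchNum_eq_one hconn, fun W _ H hH hW p hp hHp => ?_⟩
  · by_cases hcf : G.CliqueFree 3
    · obtain ⟨x⟩ := hconn.nonempty
      obtain ⟨y, hxy⟩ := hconn.preconnected.exists_adj_of_nontrivial x
      have hP := hG.adj_iff_of_cliqueFree hconn hcf hxy
      have h₁ := hG.two_mul_card_subtype_eq hP
      have h₂ := Fintype.card_subtype_compl (G.Adj · y)
      exact .inr ⟨(completeBipartiteGraphIsoOfAdjIff _ hP).symm.trans
        (SimpleGraph.completeBipartiteGraphCongr (Fintype.equivFinOfCardEq (by omega))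
          (Fintype.equivFinOfCardEq (by omega)))⟩
    · obtain ⟨s, hs⟩ : ∃ s, G.IsNClique 3 s := by simpa [SimpleGraph.CliqueFree] using hcf
      obtain ⟨a, b, c, hab, hac, hbc, -⟩ := SimpleGraph.is3Clique_iff.1 hs
      rw [hG.eq_top_of_triangle hconn hab hbc hac.symm]
      exact .inl ⟨SimpleGraph.Iso.refl⟩
  · have : Nontrivial W := Fintype.one_lt_card_iff_nontrivial.1 (by omega)
    have hH' : IsRandomlyMatchable H := isRandomlyMatchable_of_card_le_two_mul_minMatchNum
      (by rw [hHp.2.1, hW, Nat.two_mul_div_two_of_even heven])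
    have := hH'.indMatchNum_eq_one hH
    omega

end MatchingPaper
end

section
/- Let G be a finite simple graph containing two edges {u,w}, {v,w} ∈ E(G) with deg(u) = deg(v) = 1. Then ind-match(G∖v) = ind-match(G), where G∖v is the induced subgraph of G on V(G)∖{v}. -/
/-!
Induced matchings of `G.induce {v}ᶜ` are exactly the induced matchings of `G` that avoid `v`.
Since `v` is a leaf hanging at `w`, the only edge of `G` through `v` is `s(v, w)`; if an
induced matching uses it, trade it for `s(u, w)`. This keeps the matching induced because
every vertex at distance at least two from `{v, w}` is also at distance at least two from
`{u, w}`, the twin leaf `u` having no neighbour besides `w`.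
-/

namespace MatchingPaper

variable {V : Type*}

section InducedMatching

variable {W : Type*} {G : SimpleGraph V} {H : SimpleGraph W}

theorem isInducedMatching_iff {M : Finset (Sym2 V)} :
    IsInducedMatching G M ↔ (↑M : Set (Sym2 V)) ⊆ G.edgeSet ∧
      ∀ e ∈ M, ∀ f ∈ M, e ≠ f → ∀ x ∈ e, ∀ y ∈ f, x ≠ y ∧ ¬ G.Adj x y := by
  constructor
  · rintro ⟨⟨hsub, hdisj⟩, hind⟩
    refine ⟨hsub, fun e he f hf hef x hx y hy => ⟨?_, fun hxy => ?_⟩⟩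
    · rintro rfl
      exact hdisj e he f hf hef x hx hy
    · exact hind e he f hf hef s(x, y) hxy ⟨x, Sym2.mem_mk_left x y, hx⟩
        ⟨y, Sym2.mem_mk_right x y, hy⟩
  · rintro ⟨hsub, hsep⟩
    refine ⟨⟨hsub, fun e he f hf hef x hx hxf => (hsep e he f hf hef x hx x hxf).1 rfl⟩, ?_⟩
    rintro e he f hf hef g hg ⟨x, hxg, hx⟩ ⟨y, hyg, hy⟩
    obtain ⟨hxy, hnadj⟩ := hsep e he f hf hef x hx y hy
    rw [(Sym2.mem_and_mem_iff hxy).mp ⟨hxg, hyg⟩] at hg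
    exact hnadj hg

theorem IsInducedMatching.map (φ : H ↪g G) {M : Finset (Sym2 W)} (hM : IsInducedMatching H M) :
    IsInducedMatching G (M.map φ.toEmbedding.sym2Map) := by
  rw [isInducedMatching_iff] at hM ⊢
  obtain ⟨hsub, hsep⟩ := hM
  refine ⟨?_, ?_⟩
  · rintro _ he
    obtain ⟨e, he', rfl⟩ := Finset.mem_map.mp he
    exact φ.map_mem_edgeSet_iff.mpr (hsub he')
  · rintro _ he _ hf hef _ hx _ hy
    obtain ⟨e, he', rfl⟩ := Finset.mem_map.mp he
    obtain ⟨f, hf', rfl⟩ := Finset.mem_map.mp hf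
    obtain ⟨x, hx', rfl⟩ := Sym2.mem_map.mp hx
    obtain ⟨y, hy', rfl⟩ := Sym2.mem_map.mp hy
    obtain ⟨hxy, hnadj⟩ := hsep e he' f hf' (by rintro rfl; exact hef rfl) x hx' y hy'
    exact ⟨φ.injective.ne hxy, by simpa using hnadj⟩

theorem IsInducedMatching.exists_map_eq (φ : H ↪g G) {M : Finset (Sym2 V)}
    (hM : IsInducedMatching G M) (hrange : ∀ e ∈ M, ∀ x ∈ e, x ∈ Set.range φ) :
    ∃ N : Finset (Sym2 W), IsInducedMatching H N ∧ N.map φ.toEmbedding.sym2Map = M := by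
  classical
  set ψ := φ.toEmbedding.sym2Map
  have hrange' : ∀ e ∈ M, e ∈ Set.range ψ := by
    intro e he
    induction e using Sym2.ind with
    | _ a b =>
      obtain ⟨a, rfl⟩ := hrange _ he a (Sym2.mem_mk_left _ _)
      obtain ⟨b, rfl⟩ := hrange _ he b (Sym2.mem_mk_right _ _)
      exact ⟨s(a, b), rfl⟩
  refine ⟨M.preimage ψ ψ.injective.injOn, ?_, ?_⟩
  · rw [isInducedMatching_iff] at hM ⊢
    obtain ⟨hsub, hsep⟩ := hM
    refine ⟨fun e he => φ.map_mem_edgeSet_iff.mp (hsub (Finset.mem_preimage.mp he)), ?_⟩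
    intro e he f hf hef x hx y hy
    obtain ⟨hxy, hnadj⟩ := hsep _ (Finset.mem_preimage.mp he) _ (Finset.mem_preimage.mp hf)
      (ψ.injective.ne hef) _ (Sym2.mem_map.mpr ⟨x, hx, rfl⟩) _ (Sym2.mem_map.mpr ⟨y, hy, rfl⟩)
    exact ⟨fun h => hxy (congrArg φ h), fun h => hnadj (φ.map_adj_iff.mpr h)⟩
  · rw [Finset.map_eq_image, Finset.image_preimage, Finset.filter_true_of_mem hrange']

/-- The hypothesis `hdom` says that the closed neighbourhood of `e'` lies in that of `e`. -/
theorem IsInducedMatching.insert_erase [DecidableEq V] {M : Finset (Sym2 V)}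
    (hM : IsInducedMatching G M) {e e' : Sym2 V} (he : e ∈ M) (he' : e' ∈ G.edgeSet)
    (hdom : ∀ y, (∀ z ∈ e, z ≠ y ∧ ¬ G.Adj z y) → ∀ x ∈ e', x ≠ y ∧ ¬ G.Adj x y) :
    IsInducedMatching G (insert e' (M.erase e)) ∧ (insert e' (M.erase e)).card = M.card := by
  rw [isInducedMatching_iff] at hM ⊢
  obtain ⟨hsub, hsep⟩ := hM
  have hsep' : ∀ f ∈ M.erase e, ∀ x ∈ e', ∀ y ∈ f, x ≠ y ∧ ¬ G.Adj x y :=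
    fun f hf x hx y hy => hdom y (fun z hz =>
      hsep e he f (Finset.mem_of_mem_erase hf) (Finset.ne_of_mem_erase hf).symm z hz y hy) x hx
  have he'M : e' ∉ M.erase e := by
    intro h
    induction e' using Sym2.ind with
    | _ x y => exact (hsep' _ h x (Sym2.mem_mk_left x y) x (Sym2.mem_mk_left x y)).1 rfl
  refine ⟨⟨?_, ?_⟩, by rw [Finset.card_insert_of_notMem he'M, Finset.card_erase_add_one he]⟩
  · rw [Finset.coe_insert]
    exact Set.insert_subset he' ((Finset.coe_subset.mpr (Finset.erase_subset e M)).trans hsub)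
  · intro f₁ hf₁ f₂ hf₂ hne x hx y hy
    rcases Finset.mem_insert.mp hf₁ with rfl | h₁ <;> rcases Finset.mem_insert.mp hf₂ with rfl | h₂
    · exact absurd rfl hne
    · exact hsep' f₂ h₂ x hx y hy
    · obtain ⟨hyx, hnadj⟩ := hsep' f₁ h₁ y hy x hx
      exact ⟨hyx.symm, fun h => hnadj h.symm⟩
    · exact hsep f₁ (Finset.mem_of_mem_erase h₁) f₂ (Finset.mem_of_mem_erase h₂) hne x hx y hy

theorem IsInducedMatching.exists_avoid_twin_leaf [DecidableEq V] {M : Finset (Sym2 V)}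
    (hM : IsInducedMatching G M) {u v w : V} (huv : u ≠ v) (huw : G.Adj u w) (hvw : G.Adj v w)
    (hu : ∀ y, G.Adj u y → y = w) (hv : ∀ y, G.Adj v y → y = w) :
    ∃ M' : Finset (Sym2 V), IsInducedMatching G M' ∧ M'.card = M.card ∧ ∀ e ∈ M', v ∉ e := by
  have hv_edge : ∀ e ∈ M, v ∈ e → e = s(v, w) := by
    intro e he hve
    obtain ⟨y, rfl⟩ := Sym2.mem_iff_exists.mp hve
    rw [hv y (hM.1.1 he)]
  by_cases hvwM : s(v, w) ∈ M
  · have hdom : ∀ y, (∀ z ∈ s(v, w), z ≠ y ∧ ¬ G.Adj z y) →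
        ∀ x ∈ s(u, w), x ≠ y ∧ ¬ G.Adj x y := by
      intro y hy x hx
      obtain ⟨hwy, hnadj⟩ := hy w (Sym2.mem_mk_right v w)
      rcases Sym2.mem_iff.mp hx with rfl | rfl
      · exact ⟨by rintro rfl; exact hnadj huw.symm, fun h => hwy (hu y h).symm⟩
      · exact ⟨hwy, hnadj⟩
    obtain ⟨hM', hcard⟩ := hM.insert_erase hvwM huw hdom
    refine ⟨_, hM', hcard, fun e he hve => ?_⟩
    rcases Finset.mem_insert.mp he with rfl | he
    · rcases Sym2.mem_iff.mp hve with rfl | rfl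
      exacts [huv rfl, hvw.ne rfl]
    · exact Finset.ne_of_mem_erase he (hv_edge e (Finset.mem_of_mem_erase he) hve)
  · exact ⟨M, hM, rfl, fun e he hve => hvwM (hv_edge e he hve ▸ he)⟩

end InducedMatching

theorem indMatchNum_delete_twin_leaf {V : Type*} [Fintype V] (G : SimpleGraph V)
    [DecidableRel G.Adj] (u v w : V) (huv : u ≠ v)
    (huw : G.Adj u w) (hvw : G.Adj v w)
    (hdu : G.degree u = 1) (hdv : G.degree v = 1) :
    indMatchNum (G.induce ({v}ᶜ : Set V)) = indMatchNum G := by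
  classical
  have hu : ∀ y, G.Adj u y → y = w := fun y hy =>
    (SimpleGraph.degree_eq_one_iff_existsUnique_adj.mp hdu).unique hy huw
  have hv : ∀ y, G.Adj v y → y = w := fun y hy =>
    (SimpleGraph.degree_eq_one_iff_existsUnique_adj.mp hdv).unique hy hvw
  let φ := SimpleGraph.Embedding.induce (G := G) ({v}ᶜ : Set V)
  unfold indMatchNum
  congr 1
  ext n
  constructor
  · rintro ⟨M, hM, rfl⟩
    exact ⟨_, hM.map φ, Finset.card_map _⟩
  · rintro ⟨M, hM, rfl⟩
    obtain ⟨M', hM', hcard, hvM'⟩ := hM.exists_avoid_twin_leaf huv huw hvw hu hv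
    have hrange : ∀ e ∈ M', ∀ x ∈ e, x ∈ Set.range φ := fun e he x hx =>
      ⟨⟨x, fun hxv => hvM' e he (hxv ▸ hx)⟩, rfl⟩
    obtain ⟨N, hN, rfl⟩ := hM'.exists_map_eq φ hrange
    exact ⟨N, hN, by rw [← hcard, Finset.card_map]⟩

end MatchingPaper
end
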